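/- A vector polynomial in [P_n(ℝ³)]³ has zero curl if and only if it is the gradient of a scalar polynomial of degree at most n+1. -/

import Mathlib

/-!
For `w = ∑ i, X i * v i`, the contraction of `v` with the position vector,
symmetry of the Jacobian of `v` gives `∂ⱼ w = (1 + E) vⱼ`, where `E = ∑ i, X i ∂ᵢ` is the Euler
operator, which multiplies a monomial by its degree. Dividing every coefficient of `w` by the
degree of its monomial gives `q` with `∂ⱼ q = (1 + E)⁻¹ ∂ⱼ w = vⱼ`, and `deg q ≤ deg w ≤ n + 1`.
The converse is the symmetry of second partial derivatives.
-/

open MvPolynomial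

noncomputable section

abbrev Poly3 := MvPolynomial (Fin 3) ℝ

/-- Gradient of a scalar polynomial. -/
def pgrad (q : Poly3) : Fin 3 → Poly3 := fun i => pderiv i q

/-- Curl of a vector polynomial. -/
def pcurl (v : Fin 3 → Poly3) : Fin 3 → Poly3 :=
  ![pderiv 1 (v 2) - pderiv 2 (v 1),
    pderiv 2 (v 0) - pderiv 0 (v 2),
    pderiv 0 (v 1) - pderiv 1 (v 0)]

namespace MvPolynomial

section CommRing

variable {σ R : Type*} [CommRing R]

theorem pderiv_pderiv_comm (i j : σ) (p : MvPolynomial σ R) :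
    pderiv i (pderiv j p) = pderiv j (pderiv i p) := by
  classical
  -- the commutator of two derivations is a derivation, and this one kills every variable
  have hbracket : ⁅pderiv (R := R) i, pderiv (R := R) j⁆ = 0 := by
    refine derivation_ext fun k => ?_
    rw [Derivation.commutator_apply]
    simp [Pi.single_apply, apply_ite]
  exact sub_eq_zero.mp congr($hbracket p)

theorem coeff_X_mul_pderiv (i : σ) (p : MvPolynomial σ R) (m : σ →₀ ℕ) :
    coeff m (X i * pderiv i p) = m i * coeff m p := by
  classical
  rw [coeff_X_mul', coeff_pderiv]
  split_ifs with hi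
  · rw [Finsupp.mem_support_iff] at hi
    rw [Finsupp.sub_add_single_one_cancel hi, Finsupp.tsub_apply, Finsupp.single_eq_same,
      Nat.cast_sub (Nat.one_le_iff_ne_zero.mpr hi)]
    ring
  · simp [Finsupp.notMem_support_iff.mp hi]

theorem coeff_sum_X_mul_pderiv [Fintype σ] (p : MvPolynomial σ R) (m : σ →₀ ℕ) :
    coeff m (∑ i, X i * pderiv i p) = m.degree * coeff m p := by
  simp only [coeff_sum, coeff_X_mul_pderiv, ← Finset.sum_mul, Finsupp.degree_eq_sum,
    Nat.cast_sum]

theorem pderiv_sum_X_mul [Fintype σ] {v : σ → MvPolynomial σ R}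
    (hv : ∀ i j, pderiv i (v j) = pderiv j (v i)) (j : σ) :
    pderiv j (∑ i, X i * v i) = v j + ∑ i, X i * pderiv i (v j) := by
  classical
  simp only [map_sum, pderiv_mul, pderiv_X, Finset.sum_add_distrib, Pi.single_apply, ite_mul,
    one_mul, zero_mul, Finset.sum_ite_eq', Finset.mem_univ, if_true, hv j]

theorem totalDegree_sum_X_mul_le [Fintype σ] {v : σ → MvPolynomial σ R} {n : ℕ}
    (hv : ∀ i, (v i).totalDegree ≤ n) : (∑ i, X i * v i).totalDegree ≤ n + 1 := by
  refine (totalDegree_finsetSum _ _).trans (Finset.sup_le fun i _ => ?_)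
  have hX : (X i : MvPolynomial σ R).totalDegree ≤ 1 :=
    (totalDegree_monomial_le _ _).trans_eq (Finsupp.sum_single_index rfl)
  calc (X i * v i).totalDegree ≤ (X i : MvPolynomial σ R).totalDegree + (v i).totalDegree :=
        totalDegree_mul _ _
    _ ≤ 1 + n := add_le_add hX (hv i)
    _ = n + 1 := add_comm 1 n

end CommRing

section Field

variable {σ K : Type*} [Field K]

/-- Inverse of the Euler operator `∑ i, X i * pderiv i` off the constants, which it sends to `0`
(as `x / 0 = 0`). -/
def divDegree (p : MvPolynomial σ K) : MvPolynomial σ K :=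
  ∑ m ∈ p.support, monomial m (coeff m p / m.degree)

theorem coeff_divDegree (p : MvPolynomial σ K) (m : σ →₀ ℕ) :
    coeff m (divDegree p) = coeff m p / m.degree := by
  classical
  simp only [divDegree, coeff_sum, coeff_monomial, Finset.sum_ite_eq', mem_support_iff]
  split_ifs with h
  · rfl
  · rw [not_not.mp h, zero_div]

theorem totalDegree_divDegree_le (p : MvPolynomial σ K) :
    (divDegree p).totalDegree ≤ p.totalDegree :=
  (totalDegree_finsetSum _ _).trans <| Finset.sup_le fun _ hm =>
    (totalDegree_monomial_le _ _).trans (le_totalDegree hm)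

theorem coeff_pderiv_divDegree (i : σ) (p : MvPolynomial σ K) (m : σ →₀ ℕ) :
    coeff m (pderiv i (divDegree p)) = coeff m (pderiv i p) / (m.degree + 1) := by
  rw [coeff_pderiv, coeff_pderiv, coeff_divDegree, map_add, Finsupp.degree_single,
    Nat.cast_add, Nat.cast_one]
  ring

theorem pderiv_divDegree_sum_X_mul [CharZero K] [Fintype σ] {v : σ → MvPolynomial σ K}
    (hv : ∀ i j, pderiv i (v j) = pderiv j (v i)) (j : σ) :
    pderiv j (divDegree (∑ i, X i * v i)) = v j := by
  ext m
  rw [coeff_pderiv_divDegree, pderiv_sum_X_mul hv, coeff_add, coeff_sum_X_mul_pderiv]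
  rw [← one_add_mul, add_comm 1, mul_div_cancel_left₀ _ (Nat.cast_add_one_ne_zero _)]

end Field

end MvPolynomial

theorem pcurl_eq_zero_iff_pderiv_comm (v : Fin 3 → Poly3) :
    pcurl v = 0 ↔ ∀ i j, pderiv i (v j) = pderiv j (v i) := by
  simp only [pcurl, funext_iff, Pi.zero_apply, Fin.forall_fin_succ, Matrix.cons_val_zero,
    Matrix.cons_val_succ, Matrix.cons_val_fin_one, sub_eq_zero, Fin.succ_zero_eq_one,
    Fin.succ_one_eq_two, IsEmpty.forall_iff, and_true]
  grind

/-- A vector polynomial in `[P_n(ℝ³)]³` is curl-free iff it is the gradient of a scalar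
polynomial of degree at most `n+1`. -/
theorem pcurl_eq_zero_iff_gradient (n : ℕ) (v : Fin 3 → Poly3)
    (hv : ∀ i, (v i).totalDegree ≤ n) :
    pcurl v = 0 ↔ ∃ q : Poly3, q.totalDegree ≤ n + 1 ∧ v = pgrad q := by
  rw [pcurl_eq_zero_iff_pderiv_comm]
  constructor
  · intro hcurl
    exact ⟨divDegree (∑ i, X i * v i),
      (totalDegree_divDegree_le _).trans (totalDegree_sum_X_mul_le hv),
      funext fun j => (pderiv_divDegree_sum_X_mul hcurl j).symm⟩
  · rintro ⟨q, -, rfl⟩ i j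
    exact pderiv_pderiv_comm i j q
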